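/- (Lemma 3.3 (2).) Let ω' ∈ ℂ be nonzero, ω'' = ζ₃ω', and Λ = 2ω'ℤ + 2ω''ℤ. Let v₀ = v₀'ω' + v₀''ω'' with v₀', v₀'' ∈ (ℝ \ ℚ) ∩ [0,2], and let u₀ ∈ ℂ. Then the image of the lattice 𝒵_{v₀,u₀} = {ℓ₁v₀ + ℓ₂ζ₃v₀ + u₀ : ℓ₁, ℓ₂ ∈ ℤ} in the quotient torus ℂ/Λ is dense. -/

import Mathlib

open Complex Filter Topology Set

noncomputable section

/-- the primitive cube root of unity ζ₃ = e^{2πi/3} -/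
def ζ₃ : ℂ := Complex.exp (2 * Real.pi * Complex.I / 3)

/-- the period lattice Λ = 2ω'ℤ + 2ζ₃ω'ℤ as an additive subgroup of ℂ -/
def perLatSub (ω : ℂ) : AddSubgroup ℂ := AddSubgroup.closure {2 * ω, 2 * ζ₃ * ω}

/-- the lattice 𝒵_{v,u} = ℤ[ζ₃]v + u = {ℓ₁v + ℓ₂ζ₃v + u : ℓ₁, ℓ₂ ∈ ℤ} -/
def ZLat (v u : ℂ) : Set ℂ := {z : ℂ | ∃ l₁ l₂ : ℤ, z = (l₁ : ℂ) * v + (l₂ : ℂ) * ζ₃ * v + u}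

lemma zeta3_eq : ζ₃ = Complex.exp ((2 * Real.pi / 3 : ℝ) * Complex.I) := by
  rw [ζ₃]
  congr 1
  push_cast
  ring

lemma zeta3_im_pos : 0 < ζ₃.im := by
  rw [zeta3_eq, Complex.exp_ofReal_mul_I_im]
  apply Real.sin_pos_of_pos_of_lt_pi
  · positivity
  · nlinarith [Real.pi_pos]

lemma zeta3_im_ne : ζ₃.im ≠ 0 := ne_of_gt zeta3_im_pos

lemma zeta3_cube : ζ₃ ^ 3 = 1 := by
  rw [ζ₃, ← Complex.exp_nat_mul]
  have : ((3 : ℕ) : ℂ) * (2 * (Real.pi : ℂ) * Complex.I / 3) = 2 * Real.pi * Complex.I := by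
    push_cast; ring
  rw [this, Complex.exp_two_pi_mul_I]

lemma zeta3_ne_one : ζ₃ ≠ 1 := by
  intro h
  have := zeta3_im_ne
  rw [h] at this
  simp at this

lemma zeta3_sq : ζ₃ * ζ₃ = -1 - ζ₃ := by
  have h : (ζ₃ - 1) * (ζ₃ * ζ₃ + ζ₃ + 1) = 0 := by
    have := zeta3_cube
    ring_nf
    linear_combination zeta3_cube
  rcases mul_eq_zero.1 h with h1 | h2
  · exact absurd (sub_eq_zero.1 h1) zeta3_ne_one
  · linear_combination h2

/-- real independence of ω' and ζ₃ω' -/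
lemma indep_omega {ω : ℂ} (hω : ω ≠ 0) {x y : ℝ} (h : (x : ℂ) * ω + (y : ℂ) * (ζ₃ * ω) = 0) :
    x = 0 ∧ y = 0 := by
  have h' : ((x : ℂ) + (y : ℂ) * ζ₃) * ω = 0 := by linear_combination h
  have h2 : (x : ℂ) + (y : ℂ) * ζ₃ = 0 := by
    rcases mul_eq_zero.1 h' with h | h
    · exact h
    · exact absurd h hω
  have him : y * ζ₃.im = 0 := by
    have := congrArg Complex.im h2
    simpa using this
  have hy : y = 0 := by
    rcases mul_eq_zero.1 him with h | h
    · exact h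
    · exact absurd h zeta3_im_ne
  subst hy
  simp only [Complex.ofReal_zero, zero_mul, add_zero] at h2
  exact ⟨by exact_mod_cast h2, rfl⟩

/-- the subgroup ℤv + ℤζ₃v + 2ℤω + 2ℤζ₃ω -/
def Egrp (v w : ℂ) : AddSubgroup ℂ where
  carrier := {z : ℂ | ∃ a b c d : ℤ,
    z = (a : ℂ) * v + (b : ℂ) * (ζ₃ * v) + (2 * (c : ℂ)) * w + (2 * (d : ℂ)) * (ζ₃ * w)}
  zero_mem' := ⟨0, 0, 0, 0, by push_cast; ring⟩
  add_mem' := by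
    rintro x y ⟨a, b, c, d, rfl⟩ ⟨a', b', c', d', rfl⟩
    exact ⟨a + a', b + b', c + c', d + d', by push_cast; ring⟩
  neg_mem' := by
    rintro x ⟨a, b, c, d, rfl⟩
    exact ⟨-a, -b, -c, -d, by push_cast; ring⟩

lemma Egrp_zeta3_smul {v w : ℂ} {z : ℂ} (hz : z ∈ Egrp v w) : ζ₃ * z ∈ Egrp v w := by
  obtain ⟨a, b, c, d, rfl⟩ := hz
  exact ⟨-b, a - b, -d, c - d, by push_cast; linear_combination ((b : ℂ) * v + 2 * d * w) * zeta3_sq⟩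

/-- a closed additive subgroup of ℂ accumulating at 0 contains a line -/
lemma line_in_closed_subgroup (H : AddSubgroup ℂ) (hH : IsClosed (H : Set ℂ))
    (w : ℕ → ℂ) (hmem : ∀ n, w n ∈ H) (hne : ∀ n, w n ≠ 0)
    (hlim : Tendsto w atTop (𝓝 0)) :
    ∃ u : ℂ, u ≠ 0 ∧ ∀ t : ℝ, (t : ℂ) * u ∈ H := by
  set c : ℕ → ℝ := fun n => ‖w n‖ with hc
  have hcpos : ∀ n, 0 < c n := fun n => norm_pos_iff.2 (hne n)
  have husph : ∀ n, (c n)⁻¹ • w n ∈ Metric.sphere (0 : ℂ) 1 := by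
    intro n
    have h1 : ‖(c n)⁻¹ • w n‖ = 1 := by
      rw [norm_smul, Real.norm_eq_abs, abs_of_pos (inv_pos.2 (hcpos n))]
      exact inv_mul_cancel₀ (ne_of_gt (hcpos n))
    simpa using h1
  obtain ⟨u, humem, φ, hφ, hconv⟩ :=
    (isCompact_sphere (0 : ℂ) 1).tendsto_subseq husph
  have hune : u ≠ 0 := by
    intro h
    rw [h] at humem
    simp at humem
  have hclim : Tendsto (fun n => c (φ n)) atTop (𝓝 0) := by
    have : Tendsto (fun n => w (φ n)) atTop (𝓝 0) := hlim.comp hφ.tendsto_atTop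
    simpa [hc] using this.norm
  refine ⟨u, hune, fun t => ?_⟩
  set k : ℕ → ℤ := fun n => ⌊t / c (φ n)⌋ with hk
  have hmemk : ∀ n, ((k n : ℝ) * c (φ n)) • u ∈ H → True := fun _ _ => trivial
  have hkmem : ∀ n, (k n) • w (φ n) ∈ H := fun n => AddSubgroup.zsmul_mem H (hmem _) _
  have hrepr : ∀ n, (k n) • w (φ n) = ((k n : ℝ) * c (φ n)) • ((c (φ n))⁻¹ • w (φ n)) := by
    intro n
    rw [smul_smul, mul_assoc, mul_inv_cancel₀ (ne_of_gt (hcpos (φ n))), mul_one]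
    exact (Int.cast_smul_eq_zsmul ℝ _ _).symm
  have htend1 : Tendsto (fun n => (k n : ℝ) * c (φ n)) atTop (𝓝 t) := by
    have hle : ∀ n, (k n : ℝ) * c (φ n) ≤ t := by
      intro n
      have := Int.floor_le (t / c (φ n))
      calc (k n : ℝ) * c (φ n) ≤ (t / c (φ n)) * c (φ n) :=
            mul_le_mul_of_nonneg_right this (le_of_lt (hcpos (φ n)))
        _ = t := div_mul_cancel₀ t (ne_of_gt (hcpos (φ n)))
    have hge : ∀ n, t - c (φ n) ≤ (k n : ℝ) * c (φ n) := by
      intro n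
      have h1 : t / c (φ n) - 1 ≤ (k n : ℝ) := le_of_lt (Int.sub_one_lt_floor _)
      have := mul_le_mul_of_nonneg_right h1 (le_of_lt (hcpos (φ n)))
      calc t - c (φ n) = (t / c (φ n) - 1) * c (φ n) := by
            rw [sub_mul, div_mul_cancel₀ _ (ne_of_gt (hcpos (φ n))), one_mul]
        _ ≤ (k n : ℝ) * c (φ n) := this
    have hlo : Tendsto (fun n => t - c (φ n)) atTop (𝓝 t) := by
      simpa using (tendsto_const_nhds (x := t)).sub hclim
    exact tendsto_of_tendsto_of_tendsto_of_le_of_le hlo tendsto_const_nhds hge hle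
  have htend : Tendsto (fun n => (k n) • w (φ n)) atTop (𝓝 (t • u)) := by
    simp_rw [hrepr]
    exact htend1.smul hconv
  have : t • u ∈ H := hH.mem_of_tendsto htend (Eventually.of_forall hkmem)
  simpa [Complex.real_smul] using this

lemma dense_Egrp (ω' : ℂ) (hω : ω' ≠ 0) (v' v'' : ℝ) (hirr : Irrational v')
    (v₀ : ℂ) (hv₀ : v₀ = (v' : ℂ) * ω' + (v'' : ℂ) * (ζ₃ * ω')) :
    Dense ((Egrp v₀ ω' : AddSubgroup ℂ) : Set ℂ) := by
  -- density of ℤv' + 2ℤ in ℝ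
  set R : AddSubgroup ℝ := AddSubgroup.closure {v', (2 : ℝ)} with hR
  have hRdense : Dense (R : Set ℝ) := by
    rcases AddSubgroup.dense_or_cyclic R with h | ⟨a, ha⟩
    · exact h
    · exfalso
      have hv'R : v' ∈ R := AddSubgroup.subset_closure (by simp)
      have h2R : (2 : ℝ) ∈ R := AddSubgroup.subset_closure (by simp)
      rw [ha, AddSubgroup.mem_closure_singleton] at hv'R h2R
      obtain ⟨n, hn⟩ := hv'R
      obtain ⟨m, hm⟩ := h2R
      have hm0 : (m : ℝ) ≠ 0 := by
        intro h
        have : m = 0 := by exact_mod_cast h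
        subst this
        simp at hm
      rw [zsmul_eq_mul] at hn hm
      apply hirr
      refine ⟨(2 * n) / m, ?_⟩
      have ha0 : a = 2 / (m : ℝ) := by
        rw [eq_div_iff hm0]; linear_combination hm
      push_cast
      rw [← hn, ha0]
      field_simp
  -- sequence of small positive elements of ℤv' + 2ℤ
  have hseq : ∀ n : ℕ, ∃ a c : ℤ,
      0 < (a : ℝ) * v' + 2 * c ∧ (a : ℝ) * v' + 2 * c < 1 / (n + 1) := by
    intro n
    have hx : (0:ℝ) < 1 / (2 * (n + 1)) := by positivity
    have hxcl : (1 / (2 * ((n : ℝ) + 1))) ∈ closure (R : Set ℝ) := hRdense _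
    rw [Metric.mem_closure_iff] at hxcl
    obtain ⟨r, hrR, hrd⟩ := hxcl (1 / (2 * (n + 1))) hx
    have hrR' : r ∈ R := hrR
    rw [hR, AddSubgroup.mem_closure_pair] at hrR'
    obtain ⟨a, c, hac⟩ := hrR'
    rw [zsmul_eq_mul, zsmul_eq_mul] at hac
    rw [Real.dist_eq, abs_lt] at hrd
    have heq : 1 / (2 * ((n:ℝ) + 1)) + 1 / (2 * ((n:ℝ) + 1)) = 1 / ((n:ℝ) + 1) := by
      rw [← add_div, div_eq_div_iff (by positivity) (by positivity)]
      ring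
    refine ⟨a, c, by linarith [hrd.1, hrd.2, hac], by linarith [hrd.1, hrd.2, hac]⟩
  choose A C hACpos hACsmall using hseq
  -- second coordinate normalized into [0, 2]
  set K : ℕ → ℤ := fun n => -⌊(A n : ℝ) * v'' / 2⌋ with hK
  set t : ℕ → ℝ := fun n => (A n : ℝ) * v' + 2 * C n with ht
  set s : ℕ → ℝ := fun n => (A n : ℝ) * v'' + 2 * K n with hs
  have hsmem : ∀ n, s n ∈ Set.Icc (0 : ℝ) 2 := by
    intro n
    have h1 := Int.fract_nonneg ((A n : ℝ) * v'' / 2)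
    have h2 := Int.fract_lt_one ((A n : ℝ) * v'' / 2)
    rw [Int.fract] at h1 h2
    constructor
    · simp only [hs, hK]
      push_cast
      nlinarith
    · simp only [hs, hK]
      push_cast
      nlinarith
  set p : ℕ → ℂ := fun n => (t n : ℂ) * ω' + (s n : ℂ) * (ζ₃ * ω') with hp
  have hpmem : ∀ n, p n ∈ Egrp v₀ ω' := by
    intro n
    refine ⟨A n, 0, C n, K n, ?_⟩
    simp only [hp, ht, hs, hv₀]
    push_cast
    ring
  have httend : Tendsto t atTop (𝓝 0) := by
    apply squeeze_zero (fun n => le_of_lt (hACpos n)) (fun n => le_of_lt (hACsmall n))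
    exact tendsto_one_div_add_atTop_nhds_zero_nat
  obtain ⟨slim, hslimmem, φ, hφ, hsconv⟩ := (isCompact_Icc (a := (0:ℝ)) (b := 2)).tendsto_subseq hsmem
  set H : AddSubgroup ℂ := (Egrp v₀ ω').topologicalClosure with hHdef
  have hHclosed : IsClosed (H : Set ℂ) := (Egrp v₀ ω').isClosed_topologicalClosure
  have hEH : ∀ z ∈ Egrp v₀ ω', z ∈ H := fun z hz => (Egrp v₀ ω').le_topologicalClosure hz
  -- the limit point q is in H
  have httendφ : Tendsto (fun n => t (φ n)) atTop (𝓝 0) := httend.comp hφ.tendsto_atTop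
  have hptend : Tendsto (fun n => p (φ n)) atTop (𝓝 ((slim : ℂ) * (ζ₃ * ω'))) := by
    have h1 : Tendsto (fun n => ((t (φ n) : ℂ))) atTop (𝓝 0) := by
      have := (Complex.continuous_ofReal.tendsto 0).comp httendφ
      simpa [Function.comp_def] using this
    have h2 : Tendsto (fun n => ((s (φ n) : ℂ))) atTop (𝓝 (slim : ℂ)) :=
      (Complex.continuous_ofReal.tendsto slim).comp hsconv
    have := (h1.mul (tendsto_const_nhds (x := ω'))).add
      (h2.mul (tendsto_const_nhds (x := ζ₃ * ω')))
    simpa using this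
  have hqH : (slim : ℂ) * (ζ₃ * ω') ∈ H :=
    hHclosed.mem_of_tendsto hptend (Eventually.of_forall (fun n => hEH _ (hpmem (φ n))))
  -- nonzero elements of H tending to 0
  set W : ℕ → ℂ := fun n => p (φ n) - (slim : ℂ) * (ζ₃ * ω') with hW
  have hWmem : ∀ n, W n ∈ H := fun n => AddSubgroup.sub_mem H (hEH _ (hpmem (φ n))) hqH
  have hWne : ∀ n, W n ≠ 0 := by
    intro n h
    have : (t (φ n) : ℂ) * ω' + ((s (φ n) - slim : ℝ) : ℂ) * (ζ₃ * ω') = 0 := by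
      simp only [hW, hp] at h
      push_cast
      linear_combination h
    have := (indep_omega hω this).1
    exact absurd this (ne_of_gt (hACpos (φ n)))
  have hWlim : Tendsto W atTop (𝓝 0) := by
    have : Tendsto (fun n => p (φ n)) atTop (𝓝 ((slim : ℂ) * (ζ₃ * ω'))) := hptend
    have := this.sub (tendsto_const_nhds (x := (slim : ℂ) * (ζ₃ * ω')))
    simpa [hW] using this
  obtain ⟨u, hu0, hline⟩ := line_in_closed_subgroup H hHclosed W hWmem hWne hWlim
  -- H is stable under multiplication by ζ₃
  have hstab : ∀ z ∈ H, ζ₃ * z ∈ H := by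
    intro z hz
    have : ζ₃ * z ∈ closure ((Egrp v₀ ω' : AddSubgroup ℂ) : Set ℂ) := by
      apply map_mem_closure (continuous_const.mul continuous_id) hz
      intro x hx
      exact Egrp_zeta3_smul hx
    exact this
  -- conclusion: every z is in H
  intro z
  show z ∈ closure ((Egrp v₀ ω' : AddSubgroup ℂ) : Set ℂ)
  have hzH : z ∈ H := by
    set r : ℂ := z / u with hr
    set y : ℝ := r.im / ζ₃.im with hy
    set x : ℝ := r.re - y * ζ₃.re with hx
    have hrepr : (x : ℂ) + (y : ℂ) * ζ₃ = r := by
      apply Complex.ext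
      · simp [hx]
      · simp [hy, div_mul_cancel₀ _ zeta3_im_ne]
    have hz' : z = (x : ℂ) * u + (y : ℂ) * (ζ₃ * u) := by
      have : r * u = z := div_mul_cancel₀ z hu0
      calc z = r * u := this.symm
        _ = ((x : ℂ) + (y : ℂ) * ζ₃) * u := by rw [hrepr]
        _ = (x : ℂ) * u + (y : ℂ) * (ζ₃ * u) := by ring
    rw [hz']
    apply AddSubgroup.add_mem
    · exact hline x
    · have : (y : ℂ) * (ζ₃ * u) = ζ₃ * ((y : ℂ) * u) := by ring
      rw [this]
      exact hstab _ (hline y)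
  exact hzH

/-- Lemma 3.3 (2): let `ω' ≠ 0`, `ω'' = ζ₃ω'`, `Λ = 2ω'ℤ + 2ω''ℤ`, let
`v₀ = v₀'ω' + v₀''ω''` with `v₀', v₀'' ∈ (ℝ \ ℚ) ∩ [0,2]`, and `u₀ ∈ ℂ`.  Then the image
of the lattice `𝒵_{v₀,u₀} = {ℓ₁v₀ + ℓ₂ζ₃v₀ + u₀ : ℓ₁, ℓ₂ ∈ ℤ}` in the quotient torus
`ℂ/Λ` is dense. -/
theorem stmt12 (ω' : ℂ) (hω : ω' ≠ 0) (v₀' v₀'' : ℝ)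
    (hv₀'irr : Irrational v₀') (hv₀''irr : Irrational v₀'')
    (hv₀'mem : v₀' ∈ Set.Icc (0:ℝ) 2) (hv₀''mem : v₀'' ∈ Set.Icc (0:ℝ) 2)
    (v₀ u₀ : ℂ) (hv₀ : v₀ = (v₀' : ℂ) * ω' + (v₀'' : ℂ) * (ζ₃ * ω')) :
    Dense ((fun z => (QuotientAddGroup.mk z : ℂ ⧸ perLatSub ω')) '' ZLat v₀ u₀) := by
  have hE : Dense ((Egrp v₀ ω' : AddSubgroup ℂ) : Set ℂ) :=
    dense_Egrp ω' hω v₀' v₀'' hv₀'irr v₀ hv₀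
  -- translate by u₀
  have htrans : Dense ((fun z => z + u₀) '' ((Egrp v₀ ω' : AddSubgroup ℂ) : Set ℂ)) := by
    have hsurj : Function.Surjective (fun z : ℂ => z + u₀) := fun z => ⟨z - u₀, by ring⟩
    exact hsurj.denseRange.dense_image (continuous_id.add continuous_const) hE
  -- push to quotient
  have hmk_cont : Continuous (QuotientAddGroup.mk : ℂ → ℂ ⧸ perLatSub ω') :=
    QuotientAddGroup.continuous_mk
  have hmk_surj : Function.Surjective (QuotientAddGroup.mk : ℂ → ℂ ⧸ perLatSub ω') :=
    QuotientAddGroup.mk_surjective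
  have hdq : Dense ((fun z => (QuotientAddGroup.mk z : ℂ ⧸ perLatSub ω')) ''
      ((fun z => z + u₀) '' ((Egrp v₀ ω' : AddSubgroup ℂ) : Set ℂ))) :=
    hmk_surj.denseRange.dense_image hmk_cont htrans
  apply hdq.mono
  rintro _ ⟨_, ⟨w, ⟨a, b, c, d, rfl⟩, rfl⟩, rfl⟩
  refine ⟨(a : ℂ) * v₀ + (b : ℂ) * ζ₃ * v₀ + u₀, ⟨a, b, rfl⟩, ?_⟩
  rw [QuotientAddGroup.eq]
  have hdiff : -((a : ℂ) * v₀ + (b : ℂ) * ζ₃ * v₀ + u₀) +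
      ((a : ℂ) * v₀ + (b : ℂ) * (ζ₃ * v₀) + (2 * (c : ℂ)) * ω' + (2 * (d : ℂ)) * (ζ₃ * ω') + u₀)
      = c • (2 * ω') + d • (2 * ζ₃ * ω') := by
    rw [zsmul_eq_mul, zsmul_eq_mul]
    push_cast
    ring
  rw [hdiff]
  exact AddSubgroup.add_mem _
    (AddSubgroup.zsmul_mem _ (AddSubgroup.subset_closure (by simp)) c)
    (AddSubgroup.zsmul_mem _ (AddSubgroup.subset_closure (by simp)) d)
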